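/- Let R be a unital ring, n ≥ 2, M a 2-torsion free unital Mₙ(R)-bimodule, and Δ : Mₙ(R) → M an additive map satisfying: AB = BA = 0 implies Δ(A)B + AΔ(B) + Δ(B)A + BΔ(A) = 0, with EΔ(E)F = FΔ(E)E = 0 where E = E₁₁ and F = 1 - E₁₁. Then for every A ∈ Mₙ(R), Δ(EAF) = EΔ(EAF)F. -/

import Mathlib

/-!
Write `f = 1 - e` and split `Δ x = eΔ(x)e + eΔ(x)f + fΔ(x)e + fΔ(x)f` for `x ∈ eAf`.
Testing the hypothesis on the orthogonal pairs `(e, f)`, `(e - x, f + x)` and `(e + x, f - x)`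
and cutting down by `e` and `f` on either side kills `eΔ(x)e` and `fΔ(x)f` (2-torsion freeness
halves the doubled terms), provided `fΔ(x)e = 0`. For the latter, the pair `(u + u z, f - z)`
shows that `fΔ(·)e` vanishing on `z ∈ eAf` propagates to `u z` for every `u ∈ eAe`; in `Mₙ(R)`
every `x ∈ eAf` is a sum of `(x E_{j1}) E_{1j}`, and `fΔ(E_{1j})e = 0` because `E_{1j}` squares
to zero and `E_{1j} E_{j1} = e`.
-/

/-- A (not necessarily unital) bimodule structure of a ring `A` on an
additive group `M`, given by a left action `l` and a right action `r`. -/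
structure RingBimod (A M : Type*) [Ring A] [AddCommGroup M] where
  l : A → M → M
  r : M → A → M
  l_add : ∀ a m₁ m₂, l a (m₁ + m₂) = l a m₁ + l a m₂
  add_l : ∀ a₁ a₂ m, l (a₁ + a₂) m = l a₁ m + l a₂ m
  r_add : ∀ m₁ m₂ a, r (m₁ + m₂) a = r m₁ a + r m₂ a
  add_r : ∀ m a₁ a₂, r m (a₁ + a₂) = r m a₁ + r m a₂
  mul_l : ∀ a₁ a₂ m, l (a₁ * a₂) m = l a₁ (l a₂ m)
  r_mul : ∀ m a₁ a₂, r m (a₁ * a₂) = r (r m a₁) a₂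
  l_r : ∀ a₁ m a₂, l a₁ (r m a₂) = r (l a₁ m) a₂

open scoped RightActions

namespace RingBimod

variable {A M : Type*} [Ring A] [AddCommGroup M] (bm : RingBimod A M)

abbrev toModule (one_l : ∀ m, bm.l 1 m = m) : Module A M where
  smul := bm.l
  one_smul := one_l
  mul_smul := bm.mul_l
  smul_zero a := (AddMonoidHom.mk' (bm.l a) (bm.l_add a)).map_zero
  smul_add := bm.l_add
  add_smul := bm.add_l
  zero_smul m := (AddMonoidHom.mk' (bm.l · m) (bm.add_l · · m)).map_zero

abbrev toModuleMulOpposite (r_one : ∀ m, bm.r m 1 = m) : Module Aᵐᵒᵖ M where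
  smul a m := bm.r m a.unop
  one_smul := r_one
  mul_smul a b m := bm.r_mul m b.unop a.unop
  smul_zero a := (AddMonoidHom.mk' (bm.r · a.unop) (bm.r_add · · a.unop)).map_zero
  smul_add a m₁ m₂ := bm.r_add m₁ m₂ a.unop
  add_smul a b m := bm.add_r m a.unop b.unop
  zero_smul m := (AddMonoidHom.mk' (bm.r m) (bm.add_r m)).map_zero

end RingBimod

section

variable {A : Type*} [Ring A] {e x : A}

lemma one_sub_mul_eq_zero_of_mul_eq (h : e * x = x) : (1 - e) * x = 0 := by
  rw [one_sub_mul, h, sub_self]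

lemma mul_one_sub_eq_zero_of_mul_eq (h : x * e = x) : x * (1 - e) = 0 := by
  rw [mul_one_sub, h, sub_self]

lemma mul_one_sub_eq_self_of_mul_eq_zero (h : x * e = 0) : x * (1 - e) = x := by
  rw [mul_one_sub, h, sub_zero]

end

lemma mul_self_eq_zero_of_mul_eq {A : Type*} [SemigroupWithZero A] {e x : A} (hex : e * x = x)
    (hxe : x * e = 0) : x * x = 0 :=
  calc x * x = x * e * x := by rw [mul_assoc, hex]
    _ = 0 := by rw [hxe, zero_mul]

lemma op_smul_eq_zero_of_mul_eq {A M : Type*} [Monoid A] [AddMonoid M]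
    [DistribMulAction Aᵐᵒᵖ M] {e x : A} {m : M} (hx : e * x = x) (hm : m <• e = 0) :
    m <• x = 0 := by
  rw [← hx, op_smul_mul, hm, smul_zero]

section Bimodule

variable {A M : Type*} [Ring A] [AddCommGroup M] [Module A M] [Module Aᵐᵒᵖ M]

lemma eq_add_corners (e : A) (m : M) :
    m = e •> m <• e + e •> m <• (1 - e) + (1 - e) •> m <• e + (1 - e) •> m <• (1 - e) := by
  simp only [sub_smul, one_smul, smul_sub, MulOpposite.op_sub, MulOpposite.op_one]
  abel

/-- The Jordan derivation identity `Δ (a ∘ b) = Δ a ∘ b + a ∘ Δ b`, imposed only when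
`a b = b a = 0`, where it reads `0 = Δ a ∘ b + a ∘ Δ b`. -/
def IsJordanDerivationOnOrthogonal (Δ : A →+ M) : Prop :=
  ∀ a b : A, a * b = 0 → b * a = 0 → Δ a <• b + a •> Δ b + Δ b <• a + b •> Δ a = 0

variable [SMulCommClass A Aᵐᵒᵖ M]

lemma smul_op_smul_eq_zero_of_mul_eq {f x q : A} {m : M} (hx : x * f = x)
    (hm : f •> m <• q = 0) : x •> m <• q = 0 := by
  rw [← hx, mul_smul, ← smul_comm x (MulOpposite.op q), hm, smul_zero]

lemma smul_jordan_op_smul (p q a b : A) (m n : M) :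
    p •> (m <• b + a •> n + n <• a + b •> m) <• q =
      p •> m <• (b * q) + (p * a) •> n <• q + p •> n <• (a * q) + (p * b) •> m <• q := by
  simp only [smul_add, smul_smul, op_smul_mul, smul_comm p (MulOpposite.op _)]


namespace IsJordanDerivationOnOrthogonal

variable {Δ : A →+ M}

lemma smul_jordan_op_smul_eq_zero (hΔ : IsJordanDerivationOnOrthogonal Δ) {a b : A}
    (hab : a * b = 0) (hba : b * a = 0) (p q : A) :
    p •> Δ a <• (b * q) + (p * a) •> Δ b <• q + p •> Δ b <• (a * q) + (p * b) •> Δ a <• q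
      = 0 := by
  rw [← smul_jordan_op_smul, hΔ a b hab hba, smul_zero, smul_zero]

/- With `f = 1 - e`, `corner_pq_map_x` states that the Peirce component `p •> Δ x <• q`
vanishes. -/
variable {e : A}

lemma corner_fe_map_one_sub (hΔ : IsJordanDerivationOnOrthogonal Δ) (he : IsIdempotentElem e)
    (hΔe : (1 - e) •> Δ e <• e = 0) : (1 - e) •> Δ (1 - e) <• e = 0 := by
  have := hΔ.smul_jordan_op_smul_eq_zero he.mul_one_sub_self he.one_sub_mul_self (1 - e) e
  simpa only [he.one_sub_mul_self, he.eq, he.one_sub.eq, hΔe, MulOpposite.op_zero, zero_smul,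
    smul_zero, zero_add, add_zero] using this

lemma corner_ee_map_one_sub (hΔ : IsJordanDerivationOnOrthogonal Δ)
    (htf : ∀ m : M, m + m = 0 → m = 0) (he : IsIdempotentElem e) :
    e •> Δ (1 - e) <• e = 0 := by
  have := hΔ.smul_jordan_op_smul_eq_zero he.mul_one_sub_self he.one_sub_mul_self e e
  exact htf _ (by simpa only [he.one_sub_mul_self, he.mul_one_sub_self, he.eq,
    MulOpposite.op_zero, zero_smul, smul_zero, zero_add, add_zero] using this)

lemma corner_ff_map_self (hΔ : IsJordanDerivationOnOrthogonal Δ)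
    (htf : ∀ m : M, m + m = 0 → m = 0) (he : IsIdempotentElem e) :
    (1 - e) •> Δ e <• (1 - e) = 0 := by
  have := hΔ.smul_jordan_op_smul_eq_zero he.mul_one_sub_self he.one_sub_mul_self (1 - e) (1 - e)
  exact htf _ (by simpa only [he.one_sub_mul_self, he.mul_one_sub_self, he.one_sub.eq,
    MulOpposite.op_zero, zero_smul, smul_zero, zero_add, add_zero] using this)

lemma corner_fe_map_of_mem_ee (hΔ : IsJordanDerivationOnOrthogonal Δ) (he : IsIdempotentElem e)
    (hΔe : (1 - e) •> Δ e <• e = 0) {u : A} (heu : e * u = u) (hue : u * e = u) :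
    (1 - e) •> Δ u <• e = 0 := by
  have hfu := one_sub_mul_eq_zero_of_mul_eq heu
  have := hΔ.smul_jordan_op_smul_eq_zero (mul_one_sub_eq_zero_of_mul_eq hue) hfu (1 - e) e
  rw [he.one_sub_mul_self, hfu, hue, he.one_sub.eq,
    op_smul_eq_zero_of_mul_eq heu (hΔ.corner_fe_map_one_sub he hΔe)] at this
  simpa only [MulOpposite.op_zero, zero_smul, smul_zero, zero_add] using this

lemma corner_fe_map_mul (hΔ : IsJordanDerivationOnOrthogonal Δ) (he : IsIdempotentElem e)
    (hΔe : (1 - e) •> Δ e <• e = 0) {u z : A} (heu : e * u = u) (hue : u * e = u)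
    (hez : e * z = z) (hze : z * e = 0) (hz : (1 - e) •> Δ z <• e = 0) :
    (1 - e) •> Δ (u * z) <• e = 0 := by
  have hfΔf := op_smul_eq_zero_of_mul_eq heu (hΔ.corner_fe_map_one_sub he hΔe)
  have hfΔz := op_smul_eq_zero_of_mul_eq heu hz
  have hfΔu := hΔ.corner_fe_map_of_mem_ee he hΔe heu hue
  have hfu := one_sub_mul_eq_zero_of_mul_eq heu
  have huf := mul_one_sub_eq_zero_of_mul_eq hue
  have hfz := one_sub_mul_eq_zero_of_mul_eq hez
  have hzf := mul_one_sub_eq_self_of_mul_eq_zero hze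
  have hff := he.one_sub.eq
  have hfe := he.one_sub_mul_self
  have hzz := mul_self_eq_zero_of_mul_eq hez hze
  have hzu : z * u = 0 := by rw [← heu, ← mul_assoc, hze, zero_mul]
  generalize 1 - e = f at *
  have hab : (u + u * z) * (f - z) = 0 := by
    rw [add_mul, mul_sub, mul_sub, huf, mul_assoc, hzf, mul_assoc, hzz, mul_zero]; abel
  have hba : (f - z) * (u + u * z) = 0 := by
    rw [sub_mul, mul_add, mul_add, ← mul_assoc, ← mul_assoc, hfu, hzu, zero_mul]; abel
  have := hΔ.smul_jordan_op_smul_eq_zero hab hba f e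
  rw [sub_mul, hfe, hze, sub_zero, mul_add, ← mul_assoc, hfu, zero_mul, add_zero, add_mul,
    hue, mul_assoc, hze, mul_zero, add_zero, mul_sub, hff, hfz, sub_zero] at this
  simpa only [map_add, map_sub, smul_add, smul_sub, MulOpposite.op_zero, zero_smul, smul_zero,
    hfΔf, hfΔz, hfΔu, sub_zero, zero_add] using this

lemma corner_fe_map_of_mul_eq (hΔ : IsJordanDerivationOnOrthogonal Δ)
    (htf : ∀ m : M, m + m = 0 → m = 0) {z w : A} (hez : e * z = z) (hze : z * e = 0)
    (hzw : z * w = e) : (1 - e) •> Δ z <• e = 0 := by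
  have hzz := mul_self_eq_zero_of_mul_eq hez hze
  have := hΔ.smul_jordan_op_smul_eq_zero hzz hzz (1 - e) (1 - e)
  rw [mul_one_sub_eq_self_of_mul_eq_zero hze, one_sub_mul_eq_zero_of_mul_eq hez] at this
  have hfΔz : (1 - e) •> Δ z <• z = 0 :=
    htf _ (by simpa only [zero_smul, smul_zero, add_zero] using this)
  calc (1 - e) •> Δ z <• e = (1 - e) •> Δ z <• z <• w := by rw [op_smul_op_smul, hzw]
    _ = 0 := by rw [hfΔz, smul_zero]

lemma corner_ee_map_of_mem_ef (hΔ : IsJordanDerivationOnOrthogonal Δ)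
    (htf : ∀ m : M, m + m = 0 → m = 0) (he : IsIdempotentElem e)
    (hΔe : (1 - e) •> Δ e <• e = 0) {x : A} (hex : e * x = x) (hxe : x * e = 0)
    (hx : (1 - e) •> Δ x <• e = 0) : e •> Δ x <• e = 0 := by
  have hxf := mul_one_sub_eq_self_of_mul_eq_zero hxe
  have hxΔe := smul_op_smul_eq_zero_of_mul_eq hxf hΔe
  have hxΔf := smul_op_smul_eq_zero_of_mul_eq hxf (hΔ.corner_fe_map_one_sub he hΔe)
  have hxΔx := smul_op_smul_eq_zero_of_mul_eq hxf hx
  have heΔf := hΔ.corner_ee_map_one_sub htf he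
  have hfx := one_sub_mul_eq_zero_of_mul_eq hex
  have hef := he.mul_one_sub_self
  have hfe := he.one_sub_mul_self
  have hxx := mul_self_eq_zero_of_mul_eq hex hxe
  generalize 1 - e = f at *
  have hab : (e - x) * (f + x) = 0 := by
    rw [sub_mul, mul_add, mul_add, hef, hex, hxf, hxx]; abel
  have hba : (f + x) * (e - x) = 0 := by
    rw [add_mul, mul_sub, mul_sub, hfe, hfx, hxe, hxx]; abel
  have := hΔ.smul_jordan_op_smul_eq_zero hab hba e e
  rw [add_mul, hfe, hxe, add_zero, mul_sub, he.eq, hex, sub_mul, he.eq, hxe, sub_zero, mul_add,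
    hef, hex, zero_add] at this
  refine htf _ ?_
  simpa only [map_add, map_sub, smul_add, smul_sub, sub_smul, MulOpposite.op_zero, zero_smul,
    smul_zero, hxΔe, hxΔf, hxΔx, heΔf, sub_zero, zero_add, add_zero] using this

lemma corner_ff_map_of_mem_ef (hΔ : IsJordanDerivationOnOrthogonal Δ)
    (htf : ∀ m : M, m + m = 0 → m = 0) (he : IsIdempotentElem e)
    (hΔe : (1 - e) •> Δ e <• e = 0) {x : A} (hex : e * x = x) (hxe : x * e = 0)
    (hx : (1 - e) •> Δ x <• e = 0) : (1 - e) •> Δ x <• (1 - e) = 0 := by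
  have hfΔe := op_smul_eq_zero_of_mul_eq hex hΔe
  have hfΔf := op_smul_eq_zero_of_mul_eq hex (hΔ.corner_fe_map_one_sub he hΔe)
  have hfΔx := op_smul_eq_zero_of_mul_eq hex hx
  have hfΔef := hΔ.corner_ff_map_self htf he
  have hxf := mul_one_sub_eq_self_of_mul_eq_zero hxe
  have hfx := one_sub_mul_eq_zero_of_mul_eq hex
  have hef := he.mul_one_sub_self
  have hfe := he.one_sub_mul_self
  have hff := he.one_sub.eq
  have hxx := mul_self_eq_zero_of_mul_eq hex hxe
  generalize 1 - e = f at *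
  have hab : (e + x) * (f - x) = 0 := by
    rw [add_mul, mul_sub, mul_sub, hef, hex, hxf, hxx]; abel
  have hba : (f - x) * (e + x) = 0 := by
    rw [sub_mul, mul_add, mul_add, hfe, hfx, hxe, hxx]; abel
  have := hΔ.smul_jordan_op_smul_eq_zero hab hba f f
  rw [sub_mul, hff, hxf, mul_add, hfe, hfx, add_zero, add_mul, hef, hxf, zero_add, mul_sub, hff,
    hfx, sub_zero] at this
  refine htf _ ?_
  simpa only [map_add, map_sub, smul_add, smul_sub, MulOpposite.op_sub, sub_smul,
    MulOpposite.op_zero, zero_smul, smul_zero, hfΔe, hfΔf, hfΔx, hfΔef, sub_zero, zero_add,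
    add_zero] using this

theorem map_eq_corner_ef (hΔ : IsJordanDerivationOnOrthogonal Δ)
    (htf : ∀ m : M, m + m = 0 → m = 0) (he : IsIdempotentElem e)
    (hΔe : (1 - e) •> Δ e <• e = 0) {x : A} (hex : e * x = x) (hxe : x * e = 0)
    (hx : (1 - e) •> Δ x <• e = 0) : Δ x = e •> Δ x <• (1 - e) := by
  conv_lhs => rw [eq_add_corners e (Δ x)]
  rw [hΔ.corner_ee_map_of_mem_ef htf he hΔe hex hxe hx,
    hΔ.corner_ff_map_of_mem_ef htf he hΔe hex hxe hx, hx, zero_add, add_zero, add_zero]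

end IsJordanDerivationOnOrthogonal
end Bimodule

namespace Matrix

variable {ι R : Type*} [Fintype ι] [DecidableEq ι] [Ring R]

lemma eq_sum_mul_single_mul_single (x : Matrix ι ι R) (i : ι) :
    x = ∑ j, x * single j i 1 * single i j 1 := by
  simp_rw [mul_assoc, single_mul_single_same, one_mul, ← Finset.mul_sum, sum_single_one, mul_one]

lemma isIdempotentElem_single_one (i : ι) : IsIdempotentElem (single i i (1 : R)) := by
  rw [IsIdempotentElem, single_mul_single_same, one_mul]

variable {M : Type*} [AddCommGroup M] [Module (Matrix ι ι R) M] [Module (Matrix ι ι R)ᵐᵒᵖ M]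
  [SMulCommClass (Matrix ι ι R) (Matrix ι ι R)ᵐᵒᵖ M] {Δ : Matrix ι ι R →+ M}

theorem corner_fe_map_of_mem_ef (hΔ : IsJordanDerivationOnOrthogonal Δ)
    (htf : ∀ m : M, m + m = 0 → m = 0) {i : ι}
    (hΔe : (1 - single i i (1 : R)) •> Δ (single i i 1) <• single i i (1 : R) = 0)
    {x : Matrix ι ι R} (hex : single i i 1 * x = x) (hxe : x * single i i 1 = 0) :
    (1 - single i i (1 : R)) •> Δ x <• single i i (1 : R) = 0 := by
  rw [eq_sum_mul_single_mul_single x i, map_sum, Finset.smul_sum, Finset.smul_sum]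
  refine Finset.sum_eq_zero fun j _ => ?_
  obtain rfl | hji := eq_or_ne j i
  · rw [hxe, zero_mul, map_zero, smul_zero, smul_zero]
  have hez : single i i (1 : R) * single i j 1 = single i j 1 := by
    rw [single_mul_single_same, one_mul]
  have hze : single i j (1 : R) * single i i 1 = 0 := single_mul_single_of_ne (1 : R) i j i hji 1
  have hzw : single i j (1 : R) * single j i 1 = single i i 1 := by
    rw [single_mul_single_same, one_mul]
  refine hΔ.corner_fe_map_mul (isIdempotentElem_single_one i) hΔe ?_ ?_ hez hze
    (hΔ.corner_fe_map_of_mul_eq htf hez hze hzw)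
  · rw [← mul_assoc, hex]
  · rw [mul_assoc, single_mul_single_same, one_mul]

end Matrix

theorem stmt5 (R : Type*) [Ring R] (n : ℕ) (hn : 2 ≤ n)
    (M : Type*) [AddCommGroup M] (bm : RingBimod (Matrix (Fin n) (Fin n) R) M)
    (hunit : ∀ m : M, bm.l 1 m = m ∧ bm.r m 1 = m)
    (htf : ∀ m : M, m + m = 0 → m = 0)
    (Δ : Matrix (Fin n) (Fin n) R → M)
    (hadd : ∀ A B, Δ (A + B) = Δ A + Δ B)
    (hΔ : ∀ A B, A * B = 0 → B * A = 0 →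
      bm.r (Δ A) B + bm.l A (Δ B) + bm.r (Δ B) A + bm.l B (Δ A) = 0)
    (E F : Matrix (Fin n) (Fin n) R)
    (hE : E = Matrix.single ⟨0, by omega⟩ ⟨0, by omega⟩ (1 : R))
    (hF : F = 1 - E)
    (hEF2 : bm.l F (bm.r (Δ E) E) = 0) :
    ∀ A : Matrix (Fin n) (Fin n) R,
      Δ (E * A * F) = bm.l E (bm.r (Δ (E * A * F)) F) := by
  let _ := bm.toModule fun m => (hunit m).1
  let _ := bm.toModuleMulOpposite fun m => (hunit m).2
  have : SMulCommClass (Matrix (Fin n) (Fin n) R) (Matrix (Fin n) (Fin n) R)ᵐᵒᵖ M :=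
    ⟨fun a b m => bm.l_r a m b.unop⟩
  let Δ' : Matrix (Fin n) (Fin n) R →+ M := AddMonoidHom.mk' Δ hadd
  have hΔ' : IsJordanDerivationOnOrthogonal Δ' := hΔ
  have he : IsIdempotentElem E := hE ▸ Matrix.isIdempotentElem_single_one _
  have hΔE : (1 - E) •> Δ' E <• E = 0 := by rw [← smul_comm (1 - E), ← hF]; exact hEF2
  intro A
  have hex : E * (E * A * F) = E * A * F := by rw [← mul_assoc, ← mul_assoc, he.eq]
  have hxe : E * A * F * E = 0 := by rw [mul_assoc, hF, he.one_sub_mul_self, mul_zero]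
  have hx : (1 - E) •> Δ' (E * A * F) <• E = 0 := by
    subst hE
    exact Matrix.corner_fe_map_of_mem_ef hΔ' htf hΔE hex hxe
  have key := hΔ'.map_eq_corner_ef htf he hΔE hex hxe hx
  rw [← hF, ← smul_comm E] at key
  exact key
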